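/- arXiv:1507.03913 — 2 statements merged into one kernel-verified Lean document; each statement's English description precedes it below -/
import Mathlib

section
/- Orthogonality of the glued classes: with the notation of the gluing theorem, if X ∈ D satisfies qX ∈ D¹_{≥0} and i_L X ∈ D⁰_{≥0}, and Y ∈ D satisfies qY ∈ D¹_{<0} and i_R Y ∈ D⁰_{<0}, then Hom_D(X, Y) = 0. -/
/-!
Orthogonality in `D¹` kills `q f`, so `f` composed with the unit `Y ⟶ q_R q Y` vanishes and `f`
lifts through the fiber `i i_R Y ⟶ Y`. Under `i_L ⊣ i` the lift is the transpose of a morphism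
`i_L X ⟶ i_R Y`, which vanishes by orthogonality in `D⁰`.
-/

open CategoryTheory Limits ZeroObject

/-- A recollement of categories with zero objects (e.g. stable ∞-categories or
triangulated categories), in the sense of Beilinson–Bernstein–Deligne. -/
structure Recollement (D₀ : Type*) (D : Type*) (D₁ : Type*)
    [Category D₀] [Category D] [Category D₁]
    [HasZeroMorphisms D₀] [HasZeroMorphisms D] [HasZeroMorphisms D₁]
    [HasZeroObject D₀] [HasZeroObject D] [HasZeroObject D₁] where
  i : D₀ ⥤ D
  iL : D ⥤ D₀
  iR : D ⥤ D₀
  q : D ⥤ D₁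
  qL : D₁ ⥤ D
  qR : D₁ ⥤ D
  adj_iL : iL ⊣ i
  adj_iR : i ⊣ iR
  adj_qL : qL ⊣ q
  adj_qR : q ⊣ qR
  counit_iL_iso : IsIso adj_iL.counit
  unit_iR_iso : IsIso adj_iR.unit
  unit_qL_iso : IsIso adj_qL.unit
  counit_qR_iso : IsIso adj_qR.counit
  im_i_eq_ker_q : ∀ X : D, (∃ Y : D₀, Nonempty (i.obj Y ≅ X)) ↔ IsZero (q.obj X)
  fib_cofib_q_i : ∀ X : D,
    IsPullback (adj_qL.counit.app X) (0 : (q ⋙ qL).obj X ⟶ 0)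
      (adj_iL.unit.app X) (0 : (0 : D) ⟶ (iL ⋙ i).obj X) ∧
    IsPushout (adj_qL.counit.app X) (0 : (q ⋙ qL).obj X ⟶ 0)
      (adj_iL.unit.app X) (0 : (0 : D) ⟶ (iL ⋙ i).obj X)
  fib_cofib_i_q : ∀ X : D,
    IsPullback (adj_iR.counit.app X) (0 : (iR ⋙ i).obj X ⟶ 0)
      (adj_qR.unit.app X) (0 : (0 : D) ⟶ (q ⋙ qR).obj X) ∧
    IsPushout (adj_iR.counit.app X) (0 : (iR ⋙ i).obj X ⟶ 0)
      (adj_qR.unit.app X) (0 : (0 : D) ⟶ (q ⋙ qR).obj X)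

/-- A `t`-structure on a category with zero object and shift, given by an aisle and a
coaisle: both classes are closed under isomorphism and the appropriate shift, morphisms
from the aisle to the coaisle vanish, and every object sits in a (co)fiber sequence
`S X ⟶ X ⟶ R X` with `S X` in the aisle and `R X` in the coaisle. -/
structure TStructure (C : Type*) [Category C] [HasZeroMorphisms C] [HasZeroObject C]
    [HasShift C ℤ] where
  aisle : Set C
  coaisle : Set C
  aisle_iso : ∀ ⦃X Y : C⦄, (X ≅ Y) → X ∈ aisle → Y ∈ aisle
  coaisle_iso : ∀ ⦃X Y : C⦄, (X ≅ Y) → X ∈ coaisle → Y ∈ coaisle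
  aisle_shift : ∀ X ∈ aisle, X⟦(1 : ℤ)⟧ ∈ aisle
  coaisle_shift : ∀ X ∈ coaisle, X⟦(-1 : ℤ)⟧ ∈ coaisle
  hom_zero : ∀ ⦃X Y : C⦄, X ∈ aisle → Y ∈ coaisle → ∀ f : X ⟶ Y, f = 0
  trunc : ∀ X : C, ∃ (S R : C) (s : S ⟶ X) (r : X ⟶ R),
    S ∈ aisle ∧ R ∈ coaisle ∧
    IsPullback s (0 : S ⟶ 0) r (0 : (0 : C) ⟶ R) ∧
    IsPushout s (0 : S ⟶ 0) r (0 : (0 : C) ⟶ R)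

namespace CategoryTheory

variable {C E : Type*} [Category C] [Category E] [HasZeroMorphisms C] [HasZeroMorphisms E]
  {F : C ⥤ E} {G : E ⥤ C}

lemma Adjunction.comp_unit_app_eq_zero (adj : F ⊣ G) {X Y : C} {f : X ⟶ Y}
    (hf : F.map f = 0) : f ≫ adj.unit.app Y = 0 := by
  have := adj.isRightAdjoint
  rw [← adj.unit_naturality, hf, G.map_zero, comp_zero]

lemma Adjunction.eq_zero_of_homEquiv_symm_eq_zero (adj : F ⊣ G) {X : C} {A : E}
    {u : X ⟶ G.obj A} (hu : (adj.homEquiv X A).symm u = 0) : u = 0 := by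
  have := adj.isRightAdjoint
  rw [← (adj.homEquiv X A).apply_symm_apply u, hu, adj.homEquiv_unit, G.map_zero, comp_zero]

lemma IsPullback.exists_lift_of_comp_eq_zero {P X Y Z : C} {fst : P ⟶ X} {g : X ⟶ Y}
    (h : IsPullback fst (0 : P ⟶ Z) g 0) {W : C} {f : W ⟶ X} (hf : f ≫ g = 0) :
    ∃ l : W ⟶ P, l ≫ fst = f :=
  ⟨h.lift f 0 (by rw [hf, zero_comp]), h.lift_fst _ _ _⟩

end CategoryTheory

/-- Orthogonality of the glued classes: if `X` lies in the glued aisle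
(`qX ∈ D¹_{≥0}` and `i_L X ∈ D⁰_{≥0}`) and `Y` lies in the glued coaisle
(`qY ∈ D¹_{<0}` and `i_R Y ∈ D⁰_{<0}`), then every morphism `X ⟶ Y` is zero. -/
theorem recollement_glued_orthogonality
    {D₀ D D₁ : Type*} [Category D₀] [Category D] [Category D₁]
    [HasZeroMorphisms D₀] [HasZeroMorphisms D] [HasZeroMorphisms D₁]
    [HasZeroObject D₀] [HasZeroObject D] [HasZeroObject D₁]
    [HasShift D₀ ℤ] [HasShift D ℤ] [HasShift D₁ ℤ]
    (R : Recollement D₀ D D₁) (t₀ : TStructure D₀) (t₁ : TStructure D₁)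
    {X Y : D}
    (hX₁ : R.q.obj X ∈ t₁.aisle) (hX₀ : R.iL.obj X ∈ t₀.aisle)
    (hY₁ : R.q.obj Y ∈ t₁.coaisle) (hY₀ : R.iR.obj Y ∈ t₀.coaisle)
    (f : X ⟶ Y) : f = 0 := by
  obtain ⟨hfib, -⟩ := R.fib_cofib_i_q Y
  obtain ⟨g, rfl⟩ := hfib.exists_lift_of_comp_eq_zero
    (R.adj_qR.comp_unit_app_eq_zero (t₁.hom_zero hX₁ hY₁ (R.q.map f)))
  have hg : g = 0 := R.adj_iL.eq_zero_of_homEquiv_symm_eq_zero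
    (t₀.hom_zero hX₀ hY₀ ((R.adj_iL.homEquiv _ _).symm g))
  rw [hg, zero_comp]
end

section
/- In the Jacob ladder of a recollement, applying q to the truncation triangle SX → X → RX of the glued t-structure yields q(SX) ≅ S₁(qX) and q(RX) ≅ R₁(qX); i.e., q intertwines the glued truncation functors with the truncation functors of t₁. -/
/-!
Since `q` is exact, it carries the glued truncation triangle `S ⟶ X ⟶ Rt` to a fiber–cofiber
sequence `q S ⟶ q X ⟶ q Rt` whose outer terms lie in the aisle and the coaisle of `t₁`.
Truncation triangles are unique: orthogonality of aisle and coaisle makes each fiber inclusion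
factor through the other one, the two factorizations are mutually inverse, and dually for
the cofibers.
-/

open CategoryTheory Limits ZeroObject

/-- A functor preserves pullout (biCartesian) squares. -/
def PreservesPullouts {C D : Type*} [Category C] [Category D] (F : C ⥤ D) : Prop :=
  ∀ ⦃W X Y Z : C⦄ (f : W ⟶ X) (g : W ⟶ Y) (h : X ⟶ Z) (k : Y ⟶ Z),
    IsPullback f g h k → IsPushout f g h k →
      IsPullback (F.map f) (F.map g) (F.map h) (F.map k) ∧
      IsPushout (F.map f) (F.map g) (F.map h) (F.map k)

namespace CategoryTheory

variable {C : Type*} [Category C] [HasZeroMorphisms C]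

theorem IsPullback.nonempty_iso_of_comp_eq_zero {Z Z' A A' X B B' : C}
    {s : A ⟶ X} {g : A ⟶ Z} {r : X ⟶ B} {k : Z ⟶ B}
    {s' : A' ⟶ X} {g' : A' ⟶ Z'} {r' : X ⟶ B'} {k' : Z' ⟶ B'}
    (hZ : IsZero Z) (hZ' : IsZero Z') (h : IsPullback s g r k) (h' : IsPullback s' g' r' k')
    (hsr' : s ≫ r' = 0) (hs'r : s' ≫ r = 0) : Nonempty (A ≅ A') := by
  let f : A ⟶ A' := h'.lift s 0 (by rw [hsr', zero_comp])
  let f' : A' ⟶ A := h.lift s' 0 (by rw [hs'r, zero_comp])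
  have hf : f ≫ s' = s := h'.lift_fst _ _ _
  have hf' : f' ≫ s = s' := h.lift_fst _ _ _
  exact ⟨⟨f, f',
    h.hom_ext (by rw [Category.assoc, hf', hf, Category.id_comp]) (hZ.eq_of_tgt _ _),
    h'.hom_ext (by rw [Category.assoc, hf, hf', Category.id_comp]) (hZ'.eq_of_tgt _ _)⟩⟩

theorem IsPushout.nonempty_iso_of_comp_eq_zero {Z Z' A A' X B B' : C}
    {s : A ⟶ X} {g : A ⟶ Z} {r : X ⟶ B} {k : Z ⟶ B}
    {s' : A' ⟶ X} {g' : A' ⟶ Z'} {r' : X ⟶ B'} {k' : Z' ⟶ B'}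
    (hZ : IsZero Z) (hZ' : IsZero Z') (h : IsPushout s g r k) (h' : IsPushout s' g' r' k')
    (hsr' : s ≫ r' = 0) (hs'r : s' ≫ r = 0) : Nonempty (B ≅ B') := by
  let f : B ⟶ B' := h.desc r' 0 (by rw [hsr', comp_zero])
  let f' : B' ⟶ B := h'.desc r 0 (by rw [hs'r, comp_zero])
  have hf : r ≫ f = r' := h.inl_desc _ _ _
  have hf' : r' ≫ f' = r := h'.inl_desc _ _ _
  exact ⟨⟨f, f',
    h.hom_ext (by rw [← Category.assoc, hf, hf', Category.comp_id]) (hZ.eq_of_src _ _),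
    h'.hom_ext (by rw [← Category.assoc, hf', hf, Category.comp_id]) (hZ'.eq_of_src _ _)⟩⟩

end CategoryTheory

theorem Recollement.isZero_q_obj_zero {D₀ D D₁ : Type*} [Category D₀] [Category D]
    [Category D₁] [HasZeroMorphisms D₀] [HasZeroMorphisms D] [HasZeroMorphisms D₁]
    [HasZeroObject D₀] [HasZeroObject D] [HasZeroObject D₁] (R : Recollement D₀ D D₁) :
    IsZero (R.q.obj 0) :=
  have : R.q.IsLeftAdjoint := R.adj_qR.isLeftAdjoint
  R.q.map_isZero (isZero_zero D)

theorem recollement_q_intertwines_truncations_general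
    {D₀ D D₁ : Type*} [Category D₀] [Category D] [Category D₁]
    [HasZeroMorphisms D₀] [HasZeroMorphisms D] [HasZeroMorphisms D₁]
    [HasZeroObject D₀] [HasZeroObject D] [HasZeroObject D₁]
    [HasShift D₀ ℤ] [HasShift D₁ ℤ]
    (R : Recollement D₀ D D₁) (t₀ : TStructure D₀) (t₁ : TStructure D₁)
    (hq : PreservesPullouts R.q)
    -- a truncation triangle `S ⟶ X ⟶ Rt` of `X` for the glued `t`-structure
    {X S Rt : D} (s : S ⟶ X) (r : X ⟶ Rt)
    (hS : R.q.obj S ∈ t₁.aisle ∧ R.iL.obj S ∈ t₀.aisle)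
    (hR : R.q.obj Rt ∈ t₁.coaisle ∧ R.iR.obj Rt ∈ t₀.coaisle)
    (htr : IsPullback s (0 : S ⟶ 0) r (0 : (0 : D) ⟶ Rt))
    (htr' : IsPushout s (0 : S ⟶ 0) r (0 : (0 : D) ⟶ Rt))
    -- a truncation triangle `S₁ ⟶ q X ⟶ R₁` of `q X` with respect to `t₁`
    {S₁ R₁ : D₁} (s₁ : S₁ ⟶ R.q.obj X) (r₁ : R.q.obj X ⟶ R₁)
    (hS₁ : S₁ ∈ t₁.aisle) (hR₁ : R₁ ∈ t₁.coaisle)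
    (htr₁ : IsPullback s₁ (0 : S₁ ⟶ 0) r₁ (0 : (0 : D₁) ⟶ R₁))
    (htr₁' : IsPushout s₁ (0 : S₁ ⟶ 0) r₁ (0 : (0 : D₁) ⟶ R₁)) :
    Nonempty (R.q.obj S ≅ S₁) ∧ Nonempty (R.q.obj Rt ≅ R₁) := by
  obtain ⟨hpb, hpo⟩ := hq s (0 : S ⟶ 0) r (0 : (0 : D) ⟶ Rt) htr htr'
  have hsr₁ : R.q.map s ≫ r₁ = 0 := t₁.hom_zero hS.1 hR₁ _
  have hs₁r : s₁ ≫ R.q.map r = 0 := t₁.hom_zero hS₁ hR.1 _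
  exact ⟨hpb.nonempty_iso_of_comp_eq_zero R.isZero_q_obj_zero (isZero_zero D₁) htr₁ hsr₁ hs₁r,
    hpo.nonempty_iso_of_comp_eq_zero R.isZero_q_obj_zero (isZero_zero D₁) htr₁' hsr₁ hs₁r⟩

/-- In the Jacob ladder of a recollement, `q` intertwines the truncation functors of the
glued `t`-structure with those of `t₁`: applying `q` to a truncation triangle
`S X ⟶ X ⟶ R X` of the glued `t`-structure yields `q (S X) ≅ S₁ (q X)` and
`q (R X) ≅ R₁ (q X)`. -/
theorem recollement_q_intertwines_truncations
    {D₀ D D₁ : Type*} [Category D₀] [Category D] [Category D₁]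
    [HasZeroMorphisms D₀] [HasZeroMorphisms D] [HasZeroMorphisms D₁]
    [HasZeroObject D₀] [HasZeroObject D] [HasZeroObject D₁]
    [HasShift D₀ ℤ] [HasShift D ℤ] [HasShift D₁ ℤ]
    (R : Recollement D₀ D D₁) (t₀ : TStructure D₀) (t₁ : TStructure D₁)
    (hq : PreservesPullouts R.q)
    -- a truncation triangle `S ⟶ X ⟶ Rt` of `X` for the glued `t`-structure
    {X S Rt : D} (s : S ⟶ X) (r : X ⟶ Rt)
    (hS : R.q.obj S ∈ t₁.aisle ∧ R.iL.obj S ∈ t₀.aisle)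
    (hR : R.q.obj Rt ∈ t₁.coaisle ∧ R.iR.obj Rt ∈ t₀.coaisle)
    (htr : IsPullback s (0 : S ⟶ 0) r (0 : (0 : D) ⟶ Rt))
    (htr' : IsPushout s (0 : S ⟶ 0) r (0 : (0 : D) ⟶ Rt))
    -- a truncation triangle `S₁ ⟶ q X ⟶ R₁` of `q X` with respect to `t₁`
    {S₁ R₁ : D₁} (s₁ : S₁ ⟶ R.q.obj X) (r₁ : R.q.obj X ⟶ R₁)
    (hS₁ : S₁ ∈ t₁.aisle) (hR₁ : R₁ ∈ t₁.coaisle)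
    (htr₁ : IsPullback s₁ (0 : S₁ ⟶ 0) r₁ (0 : (0 : D₁) ⟶ R₁))
    (htr₁' : IsPushout s₁ (0 : S₁ ⟶ 0) r₁ (0 : (0 : D₁) ⟶ R₁)) :
    Nonempty (R.q.obj S ≅ S₁) ∧ Nonempty (R.q.obj Rt ≅ R₁) :=
  recollement_q_intertwines_truncations_general R t₀ t₁ hq s r hS hR htr htr' s₁ r₁ hS₁ hR₁ htr₁
    htr₁'
end
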